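/- arXiv:2207.05262 — 2 statements merged into one kernel-verified Lean document; each statement's English description precedes it below -/
import Mathlib

section
/- Let Σ be a signed graph with list assignment L. Then the number of proper L-colorings of Σ satisfies P(Σ, L) = ∑_{F ⊆ E(Σ)} (−1)^{|F|} γ(⟨F⟩, L) ∏_{j=1}^{b(F)} β(T_j, L), where T₁, …, T_{b(F)} are the balanced components of the spanning subgraph ⟨F⟩. -/
open scoped Classical

variable {V : Type} [Fintype V] [LinearOrder V]

def walkSign (σ : V → V → ℤ) {G : SimpleGraph V} {u v : V} (w : G.Walk u v) : ℤ :=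
  (w.darts.map fun d => σ d.toProd.1 d.toProd.2).prod

def BalancedCompAt (G : SimpleGraph V) (σ : V → V → ℤ) (v : V) : Prop :=
  ∀ u : V, G.Reachable v u → ∀ w : G.Walk u u, w.IsCycle → walkSign σ w = 1

def IsCompRep (G : SimpleGraph V) (v : V) : Prop :=
  ∀ u : V, G.Reachable v u → v ≤ u

def sideNeg (G : SimpleGraph V) (σ : V → V → ℤ) (v u : V) : Prop :=
  ∃ w : G.Walk v u, walkSign σ w = -1

noncomputable def beta (G : SimpleGraph V) (σ : V → V → ℤ) (L : V → Finset ℤ) (v : V) : ℕ :=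
  Set.ncard {a : ℤ | ∀ u : V, G.Reachable v u →
    (if sideNeg G σ v u then -a ∈ L u else a ∈ L u)}

noncomputable def gamma (G : SimpleGraph V) (σ : V → V → ℤ) (L : V → Finset ℤ) : ℤ :=
  if ∀ v : V, ¬ BalancedCompAt G σ v → (0 : ℤ) ∈ L v then 1 else 0

noncomputable def prodBeta (G : SimpleGraph V) (σ : V → V → ℤ) (L : V → Finset ℤ) : ℤ :=
  ∏ v : V, if IsCompRep G v ∧ BalancedCompAt G σ v then (beta G σ L v : ℤ) else 1

noncomputable def numColorings (G : SimpleGraph V) (σ : V → V → ℤ) (L : V → Finset ℤ) : ℕ :=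
  Set.ncard {c : V → ℤ | (∀ v, c v ∈ L v) ∧ ∀ u w, G.Adj u w → c u ≠ σ u w * c w}

def subOf (F : Finset (Sym2 V)) : SimpleGraph V := SimpleGraph.fromEdgeSet ↑F

noncomputable def Mset (k : ℕ) : Finset ℤ :=
  if Even k then (Finset.Icc (-((k / 2 : ℕ) : ℤ)) ((k / 2 : ℕ) : ℤ)).erase 0
  else Finset.Icc (-((k / 2 : ℕ) : ℤ)) ((k / 2 : ℕ) : ℤ)

noncomputable def edgeFS (G : SimpleGraph V) : Finset (Sym2 V) := G.edgeSet.toFinset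

def IsBalancedCycle (G : SimpleGraph V) (σ : V → V → ℤ) (C : Finset (Sym2 V)) : Prop :=
  ∃ (v : V) (w : G.Walk v v), w.IsCycle ∧ walkSign σ w = 1 ∧ C = w.edges.toFinset

def IsBarbell (G : SimpleGraph V) (σ : V → V → ℤ) (C : Finset (Sym2 V)) : Prop :=
  ∃ (v₁ v₂ : V) (w₁ : G.Walk v₁ v₁) (w₂ : G.Walk v₂ v₂) (p : G.Walk v₁ v₂),
    w₁.IsCycle ∧ w₂.IsCycle ∧ p.IsPath ∧
    walkSign σ w₁ = -1 ∧ walkSign σ w₂ = -1 ∧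
    (∀ x ∈ w₁.support, x ≠ v₁ → x ∉ p.support ∧ x ∉ w₂.support) ∧
    (∀ x ∈ w₂.support, x ≠ v₂ → x ∉ p.support ∧ x ∉ w₁.support) ∧
    C = w₁.edges.toFinset ∪ w₂.edges.toFinset ∪ p.edges.toFinset

def IsCircuit (G : SimpleGraph V) (σ : V → V → ℤ) (C : Finset (Sym2 V)) : Prop :=
  IsBalancedCycle G σ C ∨ IsBarbell G σ C

def IsBrokenCircuit [LinearOrder (Sym2 V)] (G : SimpleGraph V) (σ : V → V → ℤ)
    (B : Finset (Sym2 V)) : Prop :=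
  ∃ (C : Finset (Sym2 V)) (hC : C.Nonempty), IsCircuit G σ C ∧ B = C.erase (C.max' hC)

def BCFree [LinearOrder (Sym2 V)] (G : SimpleGraph V) (σ : V → V → ℤ)
    (F : Finset (Sym2 V)) : Prop :=
  ∀ B : Finset (Sym2 V), IsBrokenCircuit G σ B → ¬ B ⊆ F

noncomputable def nbcSets [LinearOrder (Sym2 V)] (G : SimpleGraph V) (σ : V → V → ℤ)
    (i : ℕ) : Finset (Finset (Sym2 V)) :=
  (edgeFS G).powerset.filter fun F => F.card = i ∧ BCFree G σ F

section SignLemmas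
set_option linter.unusedSectionVars false

open SimpleGraph Walk

variable {H : SimpleGraph V} {σ : V → V → ℤ}

lemma walkSign_nil {v : V} : walkSign σ (Walk.nil : H.Walk v v) = 1 := rfl

lemma walkSign_cons {u x w : V} (h : H.Adj u x) (p : H.Walk x w) :
    walkSign σ (Walk.cons h p) = σ u x * walkSign σ p := by
  simp [walkSign]

lemma walkSign_append {u x w : V} (p : H.Walk u x) (q : H.Walk x w) :
    walkSign σ (p.append q) = walkSign σ p * walkSign σ q := by
  simp [walkSign, Walk.darts_append]

lemma walkSign_reverse (hsym : ∀ u v, σ u v = σ v u) {u x : V} (p : H.Walk u x) :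
    walkSign σ p.reverse = walkSign σ p := by
  simp only [walkSign, Walk.darts_reverse, List.map_reverse, List.prod_reverse, List.map_map]
  congr 1
  apply List.map_congr_left
  intro d _
  exact (hsym d.toProd.1 d.toProd.2).symm

variable (hs : ∀ u v, H.Adj u v → σ u v = 1 ∨ σ u v = -1)
include hs

lemma walkSign_pm {u x : V} (p : H.Walk u x) :
    walkSign σ p = 1 ∨ walkSign σ p = -1 := by
  rw [← Int.isUnit_iff]
  apply List.prod_isUnit
  intro m hm
  simp only [List.mem_map] at hm
  obtain ⟨d, hd, rfl⟩ := hm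
  rw [Int.isUnit_iff]
  exact hs _ _ d.adj

variable (hsym : ∀ u v, σ u v = σ v u)
include hsym

lemma closedWalk_sign {v : V} (hb : BalancedCompAt H σ v) :
    ∀ n : ℕ, ∀ u : V, H.Reachable v u → ∀ w : H.Walk u u, w.length ≤ n →
      walkSign σ w = 1 := by
  intro n
  induction n using Nat.strong_induction_on with
  | _ n ih =>
  intro u hu w hlen
  by_cases hnd : w.support.tail.Nodup
  · cases w with
    | nil => rfl
    | @cons _ x _ h q =>
      rw [Walk.support_cons, List.tail_cons] at hnd
      have hqp : q.IsPath := (Walk.isPath_def q).mpr hnd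
      by_cases he : s(u, x) ∈ q.edges
      · -- backtrack case : q has length 1
        have he' : s(u, x) ∈ q.darts.map SimpleGraph.Dart.edge := he
        obtain ⟨d, hd, hde⟩ := List.mem_map.mp he'
        have hde' : s(d.toProd.1, d.toProd.2) = s(u, x) := hde
        rw [Sym2.eq_iff] at hde'
        rcases hde' with ⟨ha1, ha2⟩ | ⟨ha1, ha2⟩
        · -- d.fst = u : impossible, u is last of a nodup support
          exfalso
          have hmem : u ∈ q.support.dropLast := by
            have h' : d.toProd.1 ∈ q.darts.map (·.toProd.1) := List.mem_map_of_mem hd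
            rw [Walk.map_fst_darts] at h'
            rwa [ha1] at h'
          have hne : q.support ≠ [] := by simp
          have hsplit := List.dropLast_append_getLast hne
          rw [q.getLast_support] at hsplit
          rw [← hsplit, List.nodup_append] at hnd
          exact hnd.2.2 u hmem u (List.mem_singleton_self u) rfl
        · -- d = (x, u) : it must be the first dart, so q = cons _ nil
          cases q with
          | nil => simp at hd
          | @cons _ z _ hadj r =>
            rw [Walk.support_cons, List.nodup_cons] at hnd
            have hdd : d = SimpleGraph.Dart.mk (x, z) hadj ∨ d ∈ r.darts := by
              simpa [Walk.darts_cons] using hd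
            rcases hdd with rfl | hdr
            · obtain rfl : z = u := ha2
              cases r with
              | nil =>
                rw [walkSign_cons, walkSign_cons, walkSign_nil, mul_one, hsym x]
                rcases hs _ _ h with h1 | h1 <;> rw [h1] <;> norm_num
              | @cons _ z' _ hadj' r' =>
                exfalso
                rw [Walk.support_cons, List.nodup_cons] at hnd
                exact hnd.2.1 (Walk.end_mem_support r')
            · exfalso
              have := Walk.dart_fst_mem_support_of_mem_darts r hdr
              rw [ha1] at this
              exact hnd.1 this
      · have hc : (Walk.cons h q).IsCycle := (Walk.cons_isCycle_iff q h).mpr ⟨hqp, he⟩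
        exact hb u hu _ hc
  · -- there is a repeated vertex : split the walk
    obtain ⟨y, hy⟩ := List.exists_duplicate_iff_not_nodup.mpr hnd
    have hcount : 2 ≤ w.support.tail.count y := List.duplicate_iff_two_le_count.mp hy
    cases w with
    | nil => simp at hcount
    | @cons _ x _ h q =>
      rw [Walk.support_cons, List.tail_cons] at hcount
      have hy1 : y ∈ q.support := List.count_pos_iff.mp (by omega)
      have hspec : (q.takeUntil y hy1).append (q.dropUntil y hy1) = q := q.take_spec hy1
      have hc1 : (q.takeUntil y hy1).support.count y = 1 :=
        q.count_support_takeUntil_eq_one hy1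
      have hy2 : y ∈ (q.dropUntil y hy1).support.tail := by
        have hq : q.support = (q.takeUntil y hy1).support ++ (q.dropUntil y hy1).support.tail := by
          conv_lhs => rw [← hspec, Walk.support_append]
        rw [hq, List.count_append, hc1] at hcount
        exact List.count_pos_iff.mp (by omega)
      set q2 := q.dropUntil y hy1 with hq2def
      have hnil : ¬ q2.Nil := by
        intro hn
        rw [Walk.nil_iff_support_eq] at hn
        rw [hn] at hy2
        simp at hy2
      have hy3 : y ∈ q2.tail.support := by
        rwa [Walk.support_tail_of_not_nil q2 hnil]
      set r := q2.tail with hrdef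
      set r1 := r.takeUntil y hy3 with hr1def
      set r2 := r.dropUntil y hy3 with hr2def
      have hrspec : r1.append r2 = r := r.take_spec hy3
      -- length bookkeeping
      have l1 : (q.takeUntil y hy1).length + q2.length = q.length := by
        have := congrArg Walk.length hspec
        rwa [Walk.length_append] at this
      have l2 : r.length + 1 = q2.length := Walk.length_tail_add_one hnil
      have l3 : r1.length + r2.length = r.length := by
        have := congrArg Walk.length hrspec
        rwa [Walk.length_append] at this
      have hlen' : q.length + 1 ≤ n := by simpa [Walk.length_cons] using hlen
      -- reachability of y
      have hreach : H.Reachable v y := by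
        refine hu.trans ?_
        exact ⟨(Walk.cons h q).takeUntil y (by rw [Walk.support_cons]; right; exact hy1)⟩
      -- the two shorter closed walks
      have hcy : walkSign σ (Walk.cons (q2.adj_snd hnil) r1) = 1 := by
        apply ih (r1.length + 1) (by omega) y hreach _ (by simp [Walk.length_cons])
      have hrem : walkSign σ (Walk.cons h ((q.takeUntil y hy1).append r2)) = 1 := by
        apply ih ((q.takeUntil y hy1).length + r2.length + 1) (by omega) u hu _
          (by simp [Walk.length_cons, Walk.length_append])
      -- now compute
      have e0 : walkSign σ (q.takeUntil y hy1) * walkSign σ q2 = walkSign σ q := by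
        have := congrArg (walkSign σ) hspec
        rwa [walkSign_append] at this
      have e1 : σ y (q2.getVert 1) * walkSign σ r = walkSign σ q2 := by
        have := congrArg (walkSign σ) (q2.cons_tail_eq hnil)
        rwa [walkSign_cons] at this
      have e2 : walkSign σ r1 * walkSign σ r2 = walkSign σ r := by
        have := congrArg (walkSign σ) hrspec
        rwa [walkSign_append] at this
      rw [walkSign_cons] at hcy
      rw [walkSign_cons, walkSign_append] at hrem
      rw [walkSign_cons]
      calc σ u x * walkSign σ q
          = (σ u x * (walkSign σ (q.takeUntil y hy1) * walkSign σ r2)) *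
            (σ y (q2.getVert 1) * walkSign σ r1) := by rw [← e0, ← e1, ← e2]; ring
        _ = 1 := by rw [hrem, hcy, one_mul]

lemma walk_sign_unique {v u : V} (hb : BalancedCompAt H σ v)
    (p q : H.Walk v u) : walkSign σ p = walkSign σ q := by
  have h1 := closedWalk_sign hs hsym hb (p.append q.reverse).length v (Reachable.refl v)
    (p.append q.reverse) le_rfl
  rw [walkSign_append, walkSign_reverse hsym] at h1
  rcases walkSign_pm hs p with h | h <;> rcases walkSign_pm hs q with h' | h' <;>
    rw [h, h'] at h1 ⊢ <;> norm_num at h1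

lemma walkSign_eq_eps {v u : V} (hb : BalancedCompAt H σ v) (p : H.Walk v u) :
    walkSign σ p = (if sideNeg H σ v u then (-1 : ℤ) else 1) := by
  split_ifs with hsn
  · obtain ⟨q, hq⟩ := hsn
    rw [walk_sign_unique hs hsym hb p q, hq]
  · rcases walkSign_pm hs p with h | h
    · exact h
    · exact absurd ⟨p, h⟩ hsn

lemma sideNeg_self_false {v : V} (hb : BalancedCompAt H σ v) : ¬ sideNeg H σ v v := by
  rintro ⟨p, hp⟩
  have := closedWalk_sign hs hsym hb p.length v (Reachable.refl v) p le_rfl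
  rw [this] at hp; norm_num at hp

lemma exists_neg_closedWalk {u : V} (hb : ¬ BalancedCompAt H σ u) :
    ∃ w : H.Walk u u, walkSign σ w = -1 := by
  rw [BalancedCompAt] at hb
  push_neg at hb
  obtain ⟨x, hx, c, hc, hcs⟩ := hb
  have hcs' : walkSign σ c = -1 := by rcases walkSign_pm hs c with h | h <;> tauto
  obtain ⟨p⟩ := hx
  refine ⟨(p.append c).append p.reverse, ?_⟩
  rw [walkSign_append, walkSign_append, walkSign_reverse hsym, hcs']
  rcases walkSign_pm hs p with h | h <;> rw [h] <;> ring

lemma color_walk {c : V → ℤ} (hc : ∀ a b, H.Adj a b → c a = σ a b * c b)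
    {v u : V} (p : H.Walk v u) : c u = walkSign σ p * c v := by
  induction p with
  | nil => rw [walkSign_nil, one_mul]
  | @cons a b w h q ihq =>
    have hσ : σ a b * σ a b = 1 := by rcases hs a b h with h1 | h1 <;> rw [h1] <;> norm_num
    have hcb : c b = σ a b * c a := by
      have h2 := hc a b h
      calc c b = (σ a b * σ a b) * c b := by rw [hσ, one_mul]
        _ = σ a b * c a := by rw [mul_assoc, ← h2]
    rw [walkSign_cons, ihq, hcb]; ring

lemma color_zero {c : V → ℤ} (hc : ∀ a b, H.Adj a b → c a = σ a b * c b)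
    {u : V} (hb : ¬ BalancedCompAt H σ u) : c u = 0 := by
  obtain ⟨w, hw⟩ := exists_neg_closedWalk hs hsym hb
  have := color_walk hs hsym hc w
  rw [hw] at this
  linarith

omit hs hsym in
lemma balanced_congr {v u : V} (h : H.Reachable v u) :
    BalancedCompAt H σ v ↔ BalancedCompAt H σ u := by
  constructor <;> intro hb z hz
  · exact hb z (h.trans hz)
  · exact hb z (h.symm.trans hz)

omit hs hsym in
lemma step_B (L : V → Finset ℤ)
    (hsH : ∀ u v, H.Adj u v → σ u v = 1 ∨ σ u v = -1)
    (hsymH : ∀ u v, σ u v = σ v u) :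
    ((((Fintype.piFinset fun v => L v).filter
        fun c => ∀ a b, H.Adj a b → c a = σ a b * c b).card : ℤ)) =
      gamma H σ L * prodBeta H σ L := by
  classical
  set S := (Fintype.piFinset fun v => L v).filter
      fun c => ∀ a b, H.Adj a b → c a = σ a b * c b with hSdef
  have hmemS : ∀ c, c ∈ S ↔ (∀ v, c v ∈ L v) ∧ ∀ a b, H.Adj a b → c a = σ a b * c b := by
    intro c
    rw [hSdef, Finset.mem_filter, Fintype.mem_piFinset]
  by_cases hγ : ∀ v : V, ¬ BalancedCompAt H σ v → (0 : ℤ) ∈ L v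
  case neg =>
    have hg : gamma H σ L = 0 := by rw [gamma, if_neg hγ]
    push_neg at hγ
    obtain ⟨v, hvb, hvL⟩ := hγ
    have hS : S = ∅ := by
      rw [Finset.eq_empty_iff_forall_notMem]
      intro c hc
      rw [hmemS] at hc
      have h0 : c v = 0 := color_zero hsH hsymH hc.2 hvb
      exact hvL (h0 ▸ hc.1 v)
    rw [hS, hg]
    simp
  case pos =>
    have hg : gamma H σ L = 1 := by rw [gamma, if_pos hγ]
    rw [hg, one_mul]
    -- representative of the component of v
    have hne : ∀ v : V, (Finset.univ.filter (H.Reachable v)).Nonempty :=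
      fun v => ⟨v, by simp [Reachable.refl]⟩
    set rep : V → V := fun v => (Finset.univ.filter (H.Reachable v)).min' (hne v) with hrepdef
    have hrep_reach : ∀ v, H.Reachable v (rep v) := by
      intro v
      have := (Finset.univ.filter (H.Reachable v)).min'_mem (hne v)
      rw [Finset.mem_filter] at this
      exact this.2
    have hrep_le : ∀ v u, H.Reachable v u → rep v ≤ u := by
      intro v u h
      exact Finset.min'_le _ _ (by simp [h])
    have hrep_congr : ∀ v u, H.Reachable v u → rep v = rep u := by
      intro v u h
      have hset : Finset.univ.filter (H.Reachable v) = Finset.univ.filter (H.Reachable u) := by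
        ext z
        simp only [Finset.mem_filter, Finset.mem_univ, true_and]
        exact ⟨fun hz => h.symm.trans hz, fun hz => h.trans hz⟩
      rw [hrepdef]
      simp only
      congr 1
    have hrep_isRep : ∀ v, IsCompRep H (rep v) := by
      intro v u hu
      exact hrep_le v u ((hrep_reach v).trans hu)
    have hrep_eq_self : ∀ v, IsCompRep H v → rep v = v := by
      intro v hv
      exact le_antisymm (hrep_le v v (Reachable.refl v)) (hv (rep v) (hrep_reach v))
    -- per-vertex target finsets
    set RB : V → Prop := fun v => IsCompRep H v ∧ BalancedCompAt H σ v with hRBdef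
    set BetaF : V → Finset ℤ := fun v => if RB v then
        (L v).filter (fun a => ∀ u, H.Reachable v u →
          if sideNeg H σ v u then -a ∈ L u else a ∈ L u) else {0} with hBdef
    have hbeta_eq : ∀ v, RB v → (beta H σ L v : ℤ) = ((BetaF v).card : ℤ) := by
      intro v hv
      rw [hBdef]
      simp only [if_pos hv]
      rw [beta]
      congr 1
      have hsetEq : {a : ℤ | ∀ u : V, H.Reachable v u →
          (if sideNeg H σ v u then -a ∈ L u else a ∈ L u)} =
          ↑((L v).filter (fun a => ∀ u, H.Reachable v u →
            if sideNeg H σ v u then -a ∈ L u else a ∈ L u)) := by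
        ext a
        simp only [Set.mem_setOf_eq, Finset.coe_filter, Finset.mem_coe]
        constructor
        · intro ha
          refine ⟨?_, ha⟩
          have := ha v (Reachable.refl v)
          rwa [if_neg (sideNeg_self_false hsH hsymH hv.2)] at this
        · exact fun ha => ha.2
      rw [hsetEq, Set.ncard_coe_finset]
    set T := Fintype.piFinset BetaF with hTdef
    have hmemT : ∀ f, f ∈ T ↔ ∀ v, f v ∈ BetaF v := fun f => Fintype.mem_piFinset
    -- S and T are in bijection
    have hcard : S.card = T.card := by
      apply Finset.card_bij' (fun c _ => fun v => if RB v then c v else 0)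
        (fun f _ => fun v => if BalancedCompAt H σ (rep v) then
          (if sideNeg H σ (rep v) v then (-1 : ℤ) else 1) * f (rep v) else 0)
      · -- forward maps into T
        intro c hc
        rw [hmemS] at hc
        rw [hmemT]
        intro v
        rw [hBdef]
        simp only
        by_cases hv : RB v
        · rw [if_pos hv, if_pos hv, Finset.mem_filter]
          refine ⟨hc.1 v, ?_⟩
          intro u hu
          obtain ⟨p⟩ := hu
          have hcu := color_walk hsH hsymH hc.2 p
          rw [walkSign_eq_eps hsH hsymH hv.2 p] at hcu
          split_ifs with hsn
          · rw [if_pos hsn] at hcu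
            have : -c v = c u := by linarith
            exact this ▸ hc.1 u
          · rw [if_neg hsn, one_mul] at hcu
            exact hcu ▸ hc.1 u
        · rw [if_neg hv, if_neg hv]
          exact Finset.mem_singleton_self 0
      · -- backward maps into S
        intro f hf
        rw [hmemT] at hf
        rw [hmemS]
        constructor
        · intro v
          by_cases hbv : BalancedCompAt H σ (rep v)
          · rw [if_pos hbv]
            have hrb : RB (rep v) := ⟨hrep_isRep v, hbv⟩
            have hfv := hf (rep v)
            rw [hBdef] at hfv
            simp only [if_pos hrb, Finset.mem_filter] at hfv
            have := hfv.2 v (hrep_reach v).symm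
            split_ifs with hsn
            · rw [if_pos hsn] at this
              simpa using this
            · rw [if_neg hsn] at this
              simpa using this
          · rw [if_neg hbv]
            have hbv' : ¬ BalancedCompAt H σ v := by
              rw [balanced_congr (hrep_reach v)]
              exact hbv
            exact hγ v hbv'
        · intro a b hab
          have hrab : rep a = rep b := hrep_congr a b hab.reachable
          by_cases hba : BalancedCompAt H σ (rep a)
          · rw [if_pos hba, ← hrab, if_pos hba]
            -- ε_a = σ a b * ε_b
            obtain ⟨p⟩ := (hrep_reach b).symm
            have p' : H.Walk (rep a) b := hrab ▸ p
            have h1 := walkSign_eq_eps hsH hsymH hba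
              (p'.append (Walk.cons hab.symm Walk.nil))
            rw [walkSign_append, walkSign_cons, walkSign_nil, mul_one] at h1
            have h2 := walkSign_eq_eps hsH hsymH hba p'
            rw [h2, hsymH b a] at h1
            have h3 : (if sideNeg H σ (rep a) a then (-1 : ℤ) else 1) =
                σ a b * (if sideNeg H σ (rep a) b then (-1 : ℤ) else 1) := by
              rw [← h1]; ring
            rw [h3]; ring
          · rw [if_neg hba, ← hrab, if_neg hba, mul_zero]
      · -- left inverse
        intro c hc
        rw [hmemS] at hc
        funext v
        simp only
        by_cases hbv : BalancedCompAt H σ (rep v)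
        · rw [if_pos hbv, if_pos (show RB (rep v) from ⟨hrep_isRep v, hbv⟩)]
          obtain ⟨p⟩ := (hrep_reach v).symm
          have hcu := color_walk hsH hsymH hc.2 p
          rw [walkSign_eq_eps hsH hsymH hbv p] at hcu
          exact hcu.symm
        · rw [if_neg hbv]
          have hbv' : ¬ BalancedCompAt H σ v := by
            rw [balanced_congr (hrep_reach v)]
            exact hbv
          exact (color_zero hsH hsymH hc.2 hbv').symm
      · -- right inverse
        intro f hf
        rw [hmemT] at hf
        funext v
        simp only
        by_cases hv : RB v
        · rw [if_pos hv]
          have hrv : rep v = v := hrep_eq_self v hv.1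
          rw [hrv, if_pos hv.2, if_neg (sideNeg_self_false hsH hsymH hv.2), one_mul]
        · rw [if_neg hv]
          have := hf v
          rw [hBdef] at this
          simp only [if_neg hv, Finset.mem_singleton] at this
          exact this.symm
    rw [hcard, hTdef, Fintype.card_piFinset, prodBeta]
    push_cast
    apply Finset.prod_congr rfl
    intro v _
    by_cases hv : RB v
    · rw [if_pos hv, ← hbeta_eq v hv]
    · rw [if_neg hv, hBdef]
      simp only [if_neg hv, Finset.card_singleton, Nat.cast_one]

end SignLemmas

/-- Inclusion–exclusion expansion of the number of proper list colorings of a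
signed graph over edge subsets, in terms of `γ` and the product of `β` over
balanced components. -/
theorem stmt_5 (G : SimpleGraph V) (σ : V → V → ℤ) (L : V → Finset ℤ)
    (hsym : ∀ u v, σ u v = σ v u)
    (hsign : ∀ u v, G.Adj u v → σ u v = 1 ∨ σ u v = -1) :
    (numColorings G σ L : ℤ) =
      ∑ F ∈ (edgeFS G).powerset,
        (-1 : ℤ) ^ F.card * gamma (subOf F) σ L * prodBeta (subOf F) σ L := by
  classical
  set A := Fintype.piFinset fun v => L v with hA
  have key : ∀ F ∈ (edgeFS G).powerset,
      (-1 : ℤ) ^ F.card * gamma (subOf F) σ L * prodBeta (subOf F) σ L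
      = (-1 : ℤ) ^ F.card *
        ((A.filter fun c => ∀ a b, (subOf F).Adj a b → c a = σ a b * c b).card : ℤ) := by
    intro F hF
    rw [Finset.mem_powerset] at hF
    have hs' : ∀ u v, (subOf F).Adj u v → σ u v = 1 ∨ σ u v = -1 := by
      intro u v huv
      rw [subOf, SimpleGraph.fromEdgeSet_adj] at huv
      have h1 : s(u, v) ∈ edgeFS G := hF huv.1
      rw [edgeFS, Set.mem_toFinset, SimpleGraph.mem_edgeSet] at h1
      exact hsign u v h1
    rw [mul_assoc, step_B L hs' hsym]
  rw [Finset.sum_congr rfl key]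
  -- the bad-edge finset of a coloring
  set Bad : (V → ℤ) → Finset (Sym2 V) := fun c => (edgeFS G).filter
      (fun e => ∀ u w, e = s(u, w) → c u = σ u w * c w) with hBad
  have hflip : ∀ (c : V → ℤ) u w, G.Adj u w → c u = σ u w * c w → c w = σ w u * c u := by
    intro c u w h hc
    have hsq : σ u w * σ u w = 1 := by
      rcases hsign u w h with h1 | h1 <;> rw [h1] <;> norm_num
    rw [hsym w u]
    calc c w = (σ u w * σ u w) * c w := by rw [hsq, one_mul]
      _ = σ u w * c u := by rw [mul_assoc, ← hc]
  have hPiff : ∀ F ∈ (edgeFS G).powerset, ∀ c : V → ℤ,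
      (∀ a b, (subOf F).Adj a b → c a = σ a b * c b) ↔ F ⊆ Bad c := by
    intro F hF c
    rw [Finset.mem_powerset] at hF
    constructor
    · intro h e he
      have heG : e ∈ edgeFS G := hF he
      rw [hBad, Finset.mem_filter]
      refine ⟨heG, ?_⟩
      intro u w huw
      have hne : u ≠ w := by
        rw [edgeFS, Set.mem_toFinset, huw, SimpleGraph.mem_edgeSet] at heG
        exact heG.ne
      apply h
      rw [subOf, SimpleGraph.fromEdgeSet_adj]
      exact ⟨by rw [← huw]; exact he, hne⟩
    · intro h a b hab
      rw [subOf, SimpleGraph.fromEdgeSet_adj] at hab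
      have := h hab.1
      rw [hBad, Finset.mem_filter] at this
      exact this.2 a b rfl
  -- rewrite each inner cardinality as a sum over colorings
  have hcard : ∀ F ∈ (edgeFS G).powerset,
      (-1 : ℤ) ^ F.card *
        ((A.filter fun c => ∀ a b, (subOf F).Adj a b → c a = σ a b * c b).card : ℤ)
      = ∑ c ∈ A, (if F ⊆ Bad c then (-1 : ℤ) ^ F.card else 0) := by
    intro F hF
    have : (A.filter fun c => ∀ a b, (subOf F).Adj a b → c a = σ a b * c b)
        = A.filter fun c => F ⊆ Bad c := by
      apply Finset.filter_congr
      intro c _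
      exact (by simpa using hPiff F hF c)
    rw [this, Finset.card_filter]
    push_cast
    rw [Finset.mul_sum]
    apply Finset.sum_congr rfl
    intro c _
    by_cases h : F ⊆ Bad c <;> simp [h]
  rw [Finset.sum_congr rfl hcard, Finset.sum_comm]
  have hinner : ∀ c ∈ A,
      (∑ F ∈ (edgeFS G).powerset, if F ⊆ Bad c then (-1 : ℤ) ^ F.card else 0)
      = if Bad c = ∅ then 1 else 0 := by
    intro c _
    rw [← Finset.sum_filter]
    have hps : (edgeFS G).powerset.filter (· ⊆ Bad c) = (Bad c).powerset := by
      ext F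
      simp only [Finset.mem_filter, Finset.mem_powerset]
      constructor
      · exact fun h => h.2
      · intro h
        exact ⟨h.trans (Finset.filter_subset _ _), h⟩
    rw [hps, Finset.sum_powerset_neg_one_pow_card]
  rw [Finset.sum_congr rfl hinner]
  -- identify with the number of proper colorings
  have hset : {c : V → ℤ | (∀ v, c v ∈ L v) ∧ ∀ u w, G.Adj u w → c u ≠ σ u w * c w}
      = ↑(A.filter fun c => Bad c = ∅) := by
    ext c
    simp only [Set.mem_setOf_eq, Finset.coe_filter, Set.mem_setOf_eq, Finset.mem_coe,
      hA, Fintype.mem_piFinset]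
    constructor
    · rintro ⟨h1, h2⟩
      refine ⟨h1, ?_⟩
      rw [hBad, Finset.filter_eq_empty_iff]
      intro e he hbadE
      induction e with
      | h u w =>
        rw [edgeFS, Set.mem_toFinset, SimpleGraph.mem_edgeSet] at he
        exact h2 u w he (hbadE u w rfl)
    · rintro ⟨h1, h2⟩
      refine ⟨h1, ?_⟩
      intro u w hadj hc
      rw [hBad, Finset.filter_eq_empty_iff] at h2
      have heG : s(u, w) ∈ edgeFS G := by
        rw [edgeFS, Set.mem_toFinset, SimpleGraph.mem_edgeSet]
        exact hadj
      apply h2 heG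
      intro u' w' he'
      rw [Sym2.eq_iff] at he'
      rcases he' with ⟨rfl, rfl⟩ | ⟨rfl, rfl⟩
      · exact hc
      · exact hflip c _ _ hadj hc
  have : numColorings G σ L = (A.filter fun c => Bad c = ∅).card := by
    rw [numColorings, hset, Set.ncard_coe_finset]
  rw [this]
  rw [Finset.card_filter]
  push_cast
  apply Finset.sum_congr rfl
  intro c _
  by_cases h : Bad c = ∅ <;> simp [h]
end

section
/- Let Σ be a connected signed graph, and let T be an unbalanced connected spanning subgraph component induced by an edge set F (i.e., T contains an unbalanced cycle). For each edge e = uv ∈ F, let A_e be the set of vertex colorings c with c(w) ∈ L(w) for all w and c(u) = σ(e)c(v). Then any coloring c restricted to T lying in ⋂_{e ∈ E(T)} A_e assigns color 0 to every vertex of T; consequently the number of such restricted colorings is 1 if 0 ∈ ⋂_{v ∈ V(T)} L(v) and 0 otherwise. -/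
open scoped Classical

variable {V : Type} [Fintype V] [LinearOrder V]

lemma walkSign_nil_s6 {σ : V → V → ℤ} {G : SimpleGraph V} {v : V} :
    walkSign σ (SimpleGraph.Walk.nil : G.Walk v v) = 1 := rfl

lemma walkSign_cons_s6 {σ : V → V → ℤ} {G : SimpleGraph V} {u v w : V}
    (h : G.Adj u v) (p : G.Walk v w) :
    walkSign σ (SimpleGraph.Walk.cons h p) = σ u v * walkSign σ p := by
  simp [walkSign]

lemma walk_coloring_eq {G : SimpleGraph V} {σ : V → V → ℤ} {c : V → ℤ}
    (hc : ∀ u v, G.Adj u v → c u = σ u v * c v) :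
    ∀ {a b : V} (w : G.Walk a b), c a = walkSign σ w * c b := by
  intro a b w
  induction w with
  | nil => simp [walkSign_nil_s6]
  | cons h p ih =>
      rw [walkSign_cons_s6, mul_assoc, ← ih]
      exact hc _ _ h

lemma walkSign_ne_zero {G : SimpleGraph V} {σ : V → V → ℤ}
    (hsign : ∀ u v, G.Adj u v → σ u v = 1 ∨ σ u v = -1) :
    ∀ {a b : V} (w : G.Walk a b), walkSign σ w ≠ 0 := by
  intro a b w
  induction w with
  | nil => simp [walkSign_nil_s6]
  | cons h p ih =>
      rw [walkSign_cons_s6]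
      rcases hsign _ _ h with h1 | h1 <;> simp [h1, ih]

/-- In a connected unbalanced signed graph, any list coloring satisfying the
"equality" constraints on every edge is identically zero; consequently the number of
such colorings is 1 or 0 according to whether 0 lies in every list. -/
theorem stmt_6 (G : SimpleGraph V) (σ : V → V → ℤ) (L : V → Finset ℤ)
    (hconn : G.Connected)
    (hsym : ∀ u v, σ u v = σ v u)
    (hsign : ∀ u v, G.Adj u v → σ u v = 1 ∨ σ u v = -1)
    (hunbal : ∃ (v : V) (w : G.Walk v v), w.IsCycle ∧ walkSign σ w = -1) :
    (∀ c : V → ℤ, (∀ v, c v ∈ L v) → (∀ u v, G.Adj u v → c u = σ u v * c v) →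
      ∀ v, c v = 0) ∧
    Set.ncard {c : V → ℤ | (∀ v, c v ∈ L v) ∧ ∀ u v, G.Adj u v → c u = σ u v * c v}
      = (if ∀ v, (0 : ℤ) ∈ L v then 1 else 0) := by
  have key : ∀ c : V → ℤ, (∀ v, c v ∈ L v) →
      (∀ u v, G.Adj u v → c u = σ u v * c v) → ∀ v, c v = 0 := by
    intro c _ hc v
    obtain ⟨v₀, w, hw, hws⟩ := hunbal
    have h0 : c v₀ = 0 := by
      have := walk_coloring_eq hc w
      rw [hws] at this
      omega
    obtain ⟨p⟩ := hconn v₀ v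
    have := walk_coloring_eq hc p
    rw [h0] at this
    have hne := walkSign_ne_zero hsign p
    rcases mul_eq_zero.mp this.symm with h | h
    · exact absurd h hne
    · exact h
  refine ⟨key, ?_⟩
  by_cases h0 : ∀ v, (0 : ℤ) ∈ L v
  · rw [if_pos h0]
    have : {c : V → ℤ | (∀ v, c v ∈ L v) ∧ ∀ u v, G.Adj u v → c u = σ u v * c v}
        = {fun _ => 0} := by
      ext c
      constructor
      · rintro ⟨h1, h2⟩
        funext v
        exact key c h1 h2 v
      · rintro rfl
        exact ⟨fun v => h0 v, fun u v _ => by ring⟩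
    rw [this, Set.ncard_singleton]
  · rw [if_neg h0]
    have : {c : V → ℤ | (∀ v, c v ∈ L v) ∧ ∀ u v, G.Adj u v → c u = σ u v * c v}
        = ∅ := by
      ext c
      simp only [Set.mem_setOf_eq, Set.mem_empty_iff_false, iff_false]
      rintro ⟨h1, h2⟩
      exact h0 (fun v => key c h1 h2 v ▸ h1 v)
    rw [this, Set.ncard_empty]
end
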